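/- arXiv:2308.16401 — 2 statements merged into one kernel-verified Lean document; each statement's English description precedes it below -/
import Mathlib

section
/- Let M = I_{v1} ⊗ (aI_{v2} + bJ_{v2}) + (J_{v1} - I_{v1}) ⊗ (cI_{v2} + dJ_{v2}) be a double completely symmetric matrix. Then M has exactly four (possibly coinciding) eigenvalues: α = a - c with multiplicity (v1-1)(v2-1), β = a - c + (b-d)v2 with multiplicity v1-1, γ = a + c(v1-1) with multiplicity v2-1, and δ = a + bv2 + (v1-1)(c + dv2) with multiplicity 1. -/
open Matrix BigOperators Kronecker

/-- The `n × n` all-ones matrix. -/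
def Jmat (n : ℕ) : Matrix (Fin n) (Fin n) ℝ := Matrix.of fun _ _ => 1

/-! Every vector in the statement is a Kronecker product `x ⊗ y` of eigenvectors of the all-ones
matrices: `J p = 0` when `∑ p = 0`, and `J 1 = n • 1`. A Kronecker product of matrices acts on
`x ⊗ y` factorwise, so `M (x ⊗ y) = (a + b t + (s - 1)(c + d t)) (x ⊗ y)` whenever
`J x = s x` and `J y = t y`; the four choices `s ∈ {0, v1}`, `t ∈ {0, v2}` give the four
eigenvalues. -/

namespace Matrix

variable {R l m n o : Type*} [Fintype m] [Fintype o]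

theorem kronecker_mulVec_kronecker [CommSemiring R] (A : Matrix l m R) (B : Matrix n o R)
    (x : m → R) (y : o → R) :
    (A ⊗ₖ B) *ᵥ (fun ij => x ij.1 * y ij.2) = fun ij => (A *ᵥ x) ij.1 * (B *ᵥ y) ij.2 := by
  ext ⟨i, j⟩
  simp only [mulVec, dotProduct, Fintype.sum_prod_type, kroneckerMap_apply, Finset.sum_mul_sum]
  exact Finset.sum_congr rfl fun _ _ => Finset.sum_congr rfl fun _ _ => mul_mul_mul_comm ..

theorem kronecker_mulVec_kronecker_of_mulVec_eq_smul [CommSemiring R] {A : Matrix m m R}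
    {B : Matrix o o R} {x : m → R} {y : o → R} {r s : R}
    (hx : A *ᵥ x = r • x) (hy : B *ᵥ y = s • y) :
    (A ⊗ₖ B) *ᵥ (fun ij => x ij.1 * y ij.2) = (r * s) • fun ij => x ij.1 * y ij.2 := by
  ext ij
  simp only [kronecker_mulVec_kronecker, hx, hy, Pi.smul_apply, smul_eq_mul]
  ring

end Matrix

theorem Jmat_mulVec {n : ℕ} (p : Fin n → ℝ) : Jmat n *ᵥ p = fun _ => ∑ i, p i := by
  ext
  simp [Jmat, mulVec, dotProduct]

theorem Jmat_mulVec_of_sum_eq_zero {n : ℕ} {p : Fin n → ℝ} (hp : ∑ i, p i = 0) :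
    Jmat n *ᵥ p = (0 : ℝ) • p := by
  rw [Jmat_mulVec, hp, zero_smul]
  rfl

theorem Jmat_mulVec_one (n : ℕ) : Jmat n *ᵥ (fun _ => 1) = (n : ℝ) • fun _ => (1 : ℝ) := by
  ext
  simp [Jmat_mulVec]

section DoubleCompletelySymmetric

variable {R m n : Type*} [CommRing R] [Fintype m] [Fintype n] [DecidableEq m] [DecidableEq n]

/-- With `P = J_{v1}` and `Q = J_{v2}` this is the double completely symmetric matrix. -/
def doubleCompletelySymmetric (P : Matrix m m R) (Q : Matrix n n R) (a b c d : R) :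
    Matrix (m × n) (m × n) R :=
  (1 : Matrix m m R) ⊗ₖ (a • (1 : Matrix n n R) + b • Q) + (P - 1) ⊗ₖ (c • 1 + d • Q)

theorem doubleCompletelySymmetric_mulVec_kronecker {P : Matrix m m R} {Q : Matrix n n R}
    (a b c d : R) {x : m → R} {y : n → R} {s t : R}
    (hx : P *ᵥ x = s • x) (hy : Q *ᵥ y = t • y) :
    doubleCompletelySymmetric P Q a b c d *ᵥ (fun ij => x ij.1 * y ij.2) =
      (a + b * t + (s - 1) * (c + d * t)) • fun ij => x ij.1 * y ij.2 := by
  have hone : (1 : Matrix m m R) *ᵥ x = (1 : R) • x := by rw [one_mulVec, one_smul]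
  have hsub : (P - 1) *ᵥ x = (s - 1) • x := by rw [sub_mulVec, hone, hx, sub_smul]
  have hlin (e f : R) : (e • (1 : Matrix n n R) + f • Q) *ᵥ y = (e + f * t) • y := by
    rw [add_mulVec, smul_mulVec, smul_mulVec, one_mulVec, hy, smul_smul, ← add_smul]
  rw [doubleCompletelySymmetric, add_mulVec,
    kronecker_mulVec_kronecker_of_mulVec_eq_smul hone (hlin a b),
    kronecker_mulVec_kronecker_of_mulVec_eq_smul hsub (hlin c d), ← add_smul, one_mul]

end DoubleCompletelySymmetric

/-- the double completely symmetric matrix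
`M = I_{v1} ⊗ (aI + bJ) + (J_{v1} - I_{v1}) ⊗ (cI + dJ)` has the four eigenvalues
`α = a - c` (on vectors `p ⊗ q` with `p ⊥ 1, q ⊥ 1`, a space of dimension `(v1-1)(v2-1)`),
`β = a - c + (b - d)v2` (on `p ⊗ 1`, dimension `v1 - 1`),
`γ = a + c(v1-1)` (on `1 ⊗ q`, dimension `v2 - 1`), and
`δ = a + bv2 + (v1-1)(c + dv2)` (on `1 ⊗ 1`, dimension 1). -/
theorem double_completely_symmetric_eigenvalues (v1 v2 : ℕ) (a b c d : ℝ)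
    (M : Matrix (Fin v1 × Fin v2) (Fin v1 × Fin v2) ℝ)
    (hM : M = (1 : Matrix (Fin v1) (Fin v1) ℝ) ⊗ₖ
            (a • (1 : Matrix (Fin v2) (Fin v2) ℝ) + b • Jmat v2)
          + (Jmat v1 - 1) ⊗ₖ
            (c • (1 : Matrix (Fin v2) (Fin v2) ℝ) + d • Jmat v2)) :
    (∀ p : Fin v1 → ℝ, ∀ q : Fin v2 → ℝ, (∑ i, p i) = 0 → (∑ j, q j) = 0 →
      M.mulVec (fun ij => p ij.1 * q ij.2) = (a - c) • fun ij => p ij.1 * q ij.2) ∧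
    (∀ p : Fin v1 → ℝ, (∑ i, p i) = 0 →
      M.mulVec (fun ij => p ij.1) = (a - c + (b - d) * v2) • fun ij => p ij.1) ∧
    (∀ q : Fin v2 → ℝ, (∑ j, q j) = 0 →
      M.mulVec (fun ij => q ij.2) = (a + c * (v1 - 1)) • fun ij => q ij.2) ∧
    M.mulVec (fun _ => 1) =
      (a + b * v2 + (v1 - 1) * (c + d * v2)) • fun _ => (1 : ℝ) := by
  change M = doubleCompletelySymmetric (Jmat v1) (Jmat v2) a b c d at hM
  subst hM
  refine ⟨fun p q hp hq => ?_, fun p hp => ?_, fun q hq => ?_, ?_⟩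
  · rw [doubleCompletelySymmetric_mulVec_kronecker a b c d
      (Jmat_mulVec_of_sum_eq_zero hp) (Jmat_mulVec_of_sum_eq_zero hq)]
    congr 1
    ring
  · have h := doubleCompletelySymmetric_mulVec_kronecker a b c d
      (Jmat_mulVec_of_sum_eq_zero hp) (Jmat_mulVec_one v2)
    simp only [mul_one] at h
    rw [h]
    congr 1
    ring
  · have h := doubleCompletelySymmetric_mulVec_kronecker a b c d
      (Jmat_mulVec_one v1) (Jmat_mulVec_of_sum_eq_zero hq)
    simp only [one_mul] at h
    rw [h]
    congr 1
    ring
  · simpa only [mul_one] using doubleCompletelySymmetric_mulVec_kronecker a b c d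
      (Jmat_mulVec_one v1) (Jmat_mulVec_one v2)
end

section
/- If there exists an (r,λ)-design with v points and b blocks and an ordered design OD_η(s,b) with s > b - r, then in the resulting design matrix X = (X_1 | ⋯ | X_s), every entry of Σ_{q=1}^s X_q is at least 1 and no row of any X_q is the zero vector (i.e., the spanning condition holds). -/
open Matrix BigOperators

/-- if `H` is the incidence matrix of an `(r,λ)`-design with
nonempty blocks and `d` is an ordered design `OD_η(s,b)` with `s > b - r`, then
the resulting design matrix `X = (X_1 | ⋯ | X_s)` (row `p` of `X_q` being row
`h_{d p q}` of `H`) satisfies the spanning condition: every entry of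
`∑_q X_q` is at least 1 and no row of any `X_q` is the zero vector. -/
theorem spanning_condition (b v s N η r lam : ℕ)
    (hN : N = η * (b ^ 2 - b))
    (hs : b < s + r)
    (H : Matrix (Fin b) (Fin v) ℝ)
    (h01 : ∀ i j, H i j = 0 ∨ H i j = 1)
    (hr : ∀ j, (∑ i, H i j) = r)
    (hlam : ∀ j j', j ≠ j' → (∑ i, H i j * H i j') = lam)
    (hblocks : ∀ i, ∃ j, H i j = 1)
    (d : Fin N → Fin s → Fin b)
    (hrows : ∀ p, Function.Injective (d p))
    (hpairs : ∀ q q' : Fin s, q ≠ q' → ∀ x y : Fin b, x ≠ y →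
      (Finset.univ.filter (fun p => d p q = x ∧ d p q' = y)).card = η)
    (X : Fin s → Matrix (Fin N) (Fin v) ℝ)
    (hX : ∀ q, X q = Matrix.of fun p j => H (d p q) j) :
    (∀ (p : Fin N) (j : Fin v), 1 ≤ ∑ q, X q p j) ∧
    (∀ (q : Fin s) (p : Fin N), ∃ j, X q p j ≠ 0) := by
  constructor
  · intro p j
    -- set of blocks containing point j
    set A : Finset (Fin b) := Finset.univ.filter (fun i => H i j = 1) with hA
    have hcardA : (A.card : ℝ) = r := by
      rw [← hr j]
      rw [Finset.card_filter]
      push_cast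
      apply Finset.sum_congr rfl
      intro i _
      rcases h01 i j with h | h <;> simp [h]
    have hcardA' : A.card = r := by exact_mod_cast hcardA
    -- image of row p of d
    set S : Finset (Fin b) := Finset.univ.image (d p) with hS
    have hcardS : S.card = s := by
      rw [hS, Finset.card_image_of_injective _ (hrows p), Finset.card_univ, Fintype.card_fin]
    have hinter : (S ∩ A).Nonempty := by
      by_contra hempty
      rw [Finset.not_nonempty_iff_eq_empty, ← Finset.disjoint_iff_inter_eq_empty] at hempty
      have := Finset.card_union_of_disjoint hempty
      have hle : (S ∪ A).card ≤ b := by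
        simpa using Finset.card_le_card (Finset.subset_univ (S ∪ A))
      omega
    obtain ⟨i, hi⟩ := hinter
    have hiS : i ∈ S := (Finset.mem_inter.mp hi).1
    have hiA : i ∈ A := (Finset.mem_inter.mp hi).2
    obtain ⟨q, -, hq⟩ := Finset.mem_image.mp hiS
    have hiA1 : H i j = 1 := (Finset.mem_filter.mp hiA).2
    have hone : X q p j = 1 := by rw [hX q]; simp [hq, hiA1]
    have hnonneg : ∀ q' : Fin s, q' ∈ Finset.univ → (0:ℝ) ≤ X q' p j := by
      intro q' _
      rw [hX q']
      rcases h01 (d p q') j with h | h <;> simp [h]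
    calc (1:ℝ) = X q p j := hone.symm
      _ ≤ ∑ q', X q' p j := Finset.single_le_sum hnonneg (Finset.mem_univ q)
  · intro q p
    obtain ⟨j, hj⟩ := hblocks (d p q)
    exact ⟨j, by rw [hX q]; simp [hj]⟩
end
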